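/- arXiv:2604.03772 — 2 statements merged into one kernel-verified Lean document; each statement's English description precedes it below -/
import Mathlib

section
/- Let $O=(Y,A,X,S)$ be discrete with $X=(V,U)$, and assume positivity, unconfoundedness $Y \perp A \mid (X,S=1)$, and source exchangeability $Y \perp S \mid V$. Fix $r$, let $q(x)=P(R(Y,V)\le r \mid X=x,A=1,S=1)$, $m(v)=E[q(X)\mid V=v,S=1]$, $g(x)=P(A=1\mid X=x,S=1)$, $\kappa(v)=P(S=1\mid V=v)$, and suppose $P(R(Y,V)\le r\mid S=0)=1-\alpha$. Define $\chi(O) = (1-S)(m(V)-(1-\alpha)) + \frac{S(1-\kappa(V))}{\kappa(V)}(q(X)-m(V)) + \frac{\mathbb{1}(A=1)S(1-\kappa(V))}{g(X)\kappa(V)}(\mathbb{1}(R(Y,V)\le r)-q(X))$. Then $E[\chi(O)] = 0$. -/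
open scoped Classical
open Finset

/-- Probability of an event under a discrete (finite) probability weight `p`. -/
noncomputable def prob {Ω : Type*} [Fintype Ω] (p : Ω → ℝ) (E : Ω → Prop) : ℝ :=
  ∑ ω, if E ω then p ω else 0

/-- Conditional probability `P(A | B)`. -/
noncomputable def cprob {Ω : Type*} [Fintype Ω] (p : Ω → ℝ) (A B : Ω → Prop) : ℝ :=
  prob p (fun ω => A ω ∧ B ω) / prob p B

/-- Expectation `E[f]`. -/
noncomputable def expect {Ω : Type*} [Fintype Ω] (p : Ω → ℝ) (f : Ω → ℝ) : ℝ :=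
  ∑ ω, p ω * f ω

/-- Conditional expectation `E[f | B]`. -/
noncomputable def cexpect {Ω : Type*} [Fintype Ω] (p : Ω → ℝ) (f : Ω → ℝ) (B : Ω → Prop) : ℝ :=
  (∑ ω, if B ω then p ω * f ω else 0) / prob p B

/-- Conditional independence `X ⟂ Z ∣ W` (on an additional conditioning event `E`),
in the discrete sense. -/
def CondIndepOn {Ω 𝓧 𝓩 𝓦 : Type*} [Fintype Ω] (p : Ω → ℝ)
    (X : Ω → 𝓧) (Z : Ω → 𝓩) (W : Ω → 𝓦) (E : Ω → Prop) : Prop :=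
  ∀ x z w, 0 < prob p (fun ω => W ω = w ∧ E ω) →
    cprob p (fun ω => X ω = x ∧ Z ω = z) (fun ω => W ω = w ∧ E ω) =
      cprob p (fun ω => X ω = x) (fun ω => W ω = w ∧ E ω) *
        cprob p (fun ω => Z ω = z) (fun ω => W ω = w ∧ E ω)

/-- Conditional independence `X ⟂ Z ∣ W` in the discrete sense. -/
def CondIndep {Ω 𝓧 𝓩 𝓦 : Type*} [Fintype Ω] (p : Ω → ℝ)
    (X : Ω → 𝓧) (Z : Ω → 𝓩) (W : Ω → 𝓦) : Prop :=
  CondIndepOn p X Z W (fun _ => True)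

/-- The pinball (quantile) loss at level `α`. -/
noncomputable def pinball (α x : ℝ) : ℝ :=
  α * |x| * (if 0 ≤ x then 1 else 0) + (1 - α) * |x| * (if x < 0 then 1 else 0)

/-- Real-valued indicator of a proposition. -/
noncomputable def ind (P : Prop) : ℝ := if P then 1 else 0

section Helpers
variable {Ω : Type*} [Fintype Ω] (p : Ω → ℝ)

lemma probc {E F : Ω → Prop} (h : ∀ ω, E ω ↔ F ω) : prob p E = prob p F := by
  unfold prob; exact Finset.sum_congr rfl fun ω _ => by simp only [h]

lemma prob_nn (hp : ∀ ω, 0 ≤ p ω) (E : Ω → Prop) : 0 ≤ prob p E :=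
  Finset.sum_nonneg fun ω _ => by by_cases h : E ω <;> simp [h, hp ω]

lemma prob_mono (hp : ∀ ω, 0 ≤ p ω) {E F : Ω → Prop} (h : ∀ ω, E ω → F ω) :
    prob p E ≤ prob p F := by
  refine Finset.sum_le_sum fun ω _ => ?_
  by_cases hE : E ω
  · simp [hE, h ω hE]
  · simp only [hE, if_false]
    by_cases hF : F ω <;> simp [hF, hp ω]

lemma prob_zero (hp : ∀ ω, 0 ≤ p ω) {E : Ω → Prop} (hE : prob p E = 0)
    {ω : Ω} (hω : E ω) : p ω = 0 := by
  have := (Finset.sum_eq_zero_iff_of_nonneg (fun ω _ => by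
    by_cases h : E ω <;> simp [h, hp ω])).mp hE ω (Finset.mem_univ ω)
  simpa [hω] using this

lemma prob_le_zero (hp : ∀ ω, 0 ≤ p ω) {E F : Ω → Prop} (h : ∀ ω, E ω → F ω)
    (hF : prob p F = 0) : prob p E = 0 :=
  le_antisymm (hF ▸ prob_mono p hp h) (prob_nn p hp E)

lemma cprob_congr {A B A' B' : Ω → Prop} (hA : ∀ ω, A ω ↔ A' ω) (hB : ∀ ω, B ω ↔ B' ω) :
    cprob p A B = cprob p A' B' := by
  unfold cprob
  rw [probc p (fun ω => and_congr (hA ω) (hB ω)), probc p hB]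

lemma fiber_sum {𝓧 : Type*} (X : Ω → 𝓧) (f : Ω → ℝ) :
    ∑ ω, f ω = ∑ x ∈ Finset.univ.image X, ∑ ω, if X ω = x then f ω else 0 := by
  rw [Finset.sum_comm]
  refine Finset.sum_congr rfl fun ω _ => ?_
  rw [Finset.sum_ite_eq (Finset.univ.image X) (X ω) (fun _ => f ω)]
  simp

lemma prob_comp {𝓨 : Type*} (Y : Ω → 𝓨) (Q : 𝓨 → Prop) (B : Ω → Prop) :
    prob p (fun ω => Q (Y ω) ∧ B ω) =
      ∑ y ∈ Finset.univ.image Y, if Q y then prob p (fun ω => Y ω = y ∧ B ω) else 0 := by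
  have h1 : ∀ y, (if Q y then prob p (fun ω => Y ω = y ∧ B ω) else 0)
      = ∑ ω, if Y ω = y then (if Q y ∧ B ω then p ω else 0) else 0 := by
    intro y
    by_cases hQ : Q y
    · simp only [hQ, if_true, true_and, prob]
      exact Finset.sum_congr rfl fun ω _ => by
        by_cases h1 : Y ω = y <;> by_cases h2 : B ω <;> simp [h1, h2]
    · simp [hQ]
  refine Eq.trans ?_ (Finset.sum_congr rfl fun y _ => (h1 y).symm)
  rw [Finset.sum_comm]
  unfold prob
  refine Finset.sum_congr rfl fun ω _ => ?_
  rw [Finset.sum_ite_eq (Finset.univ.image Y) (Y ω)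
    (fun y => if Q y ∧ B ω then p ω else 0)]
  simp

lemma ind_sum_prob (E : Ω → Prop) : ∑ ω, ind (E ω) * p ω = prob p E := by
  unfold prob
  refine Finset.sum_congr rfl fun ω _ => ?_
  by_cases h : E ω <;> simp [ind, h]

lemma fiber_sum_ind {𝓧 : Type*} (X : Ω → 𝓧) (f : Ω → ℝ) :
    ∑ ω, f ω = ∑ x ∈ Finset.univ.image X, ∑ ω, ind (X ω = x) * f ω := by
  rw [fiber_sum X f]
  exact Finset.sum_congr rfl fun x _ => Finset.sum_congr rfl fun ω _ => by
    by_cases h : X ω = x <;> simp [ind, h]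

end Helpers

/-- the efficient influence curve has mean zero. -/
theorem stmt4 {Ω 𝓨 𝓥 𝓤 : Type*} [Fintype Ω]
    (p : Ω → ℝ) (hp : ∀ ω, 0 ≤ p ω) (hsum : ∑ ω, p ω = 1)
    (Y : Ω → 𝓨) (A S : Ω → Bool) (V : Ω → 𝓥) (U : Ω → 𝓤)
    (g : 𝓥 × 𝓤 → ℝ) (κ : 𝓥 → ℝ) (q : 𝓥 × 𝓤 → ℝ) (m : 𝓥 → ℝ)
    (R : 𝓨 → 𝓥 → ℝ) (r α : ℝ)
    (hg : ∀ x, g x = cprob p (fun ω => A ω = true) (fun ω => (V ω, U ω) = x ∧ S ω = true))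
    (hκ : ∀ v, κ v = cprob p (fun ω => S ω = true) (fun ω => V ω = v))
    (hq : ∀ x, q x = cprob p (fun ω => R (Y ω) (V ω) ≤ r)
      (fun ω => (V ω, U ω) = x ∧ A ω = true ∧ S ω = true))
    (hm : ∀ v, m v = cexpect p (fun ω => q (V ω, U ω)) (fun ω => V ω = v ∧ S ω = true))
    (hgpos : ∀ x, 0 < prob p (fun ω => (V ω, U ω) = x ∧ S ω = true) → 0 < g x ∧ g x < 1)
    (hκpos : ∀ v, 0 < prob p (fun ω => V ω = v) → 0 < κ v ∧ κ v < 1)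
    (hπpos : ∀ x, 0 < prob p (fun ω => (V ω, U ω) = x) →
      0 < cprob p (fun ω => S ω = true) (fun ω => (V ω, U ω) = x))
    (hS0 : 0 < prob p (fun ω => S ω = false))
    (hunconf : CondIndepOn p Y A (fun ω => (V ω, U ω)) (fun ω => S ω = true))
    (hexch : CondIndep p Y S V)
    (hr : cprob p (fun ω => R (Y ω) (V ω) ≤ r) (fun ω => S ω = false) = 1 - α) :
    expect p (fun ω =>
      ind (S ω = false) * (m (V ω) - (1 - α))
      + ind (S ω = true) * (1 - κ (V ω)) / κ (V ω) * (q (V ω, U ω) - m (V ω))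
      + ind (A ω = true) * ind (S ω = true) * (1 - κ (V ω)) / (g (V ω, U ω) * κ (V ω)) *
          (ind (R (Y ω) (V ω) ≤ r) - q (V ω, U ω)))
      = 0 := by
  -- FACT A : q x * P(X=x, S) = P(R ≤ r, X=x, S)
  have qkey : ∀ x : 𝓥 × 𝓤,
      q x * prob p (fun ω => (V ω, U ω) = x ∧ A ω = true ∧ S ω = true)
        = prob p (fun ω => R (Y ω) (V ω) ≤ r ∧ (V ω, U ω) = x ∧ A ω = true ∧ S ω = true) := by
    intro x
    by_cases h : prob p (fun ω => (V ω, U ω) = x ∧ A ω = true ∧ S ω = true) = 0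
    · rw [h, mul_zero]
      exact (prob_le_zero p hp (fun ω hω => hω.2) h).symm
    · rw [hq x]; exact div_mul_cancel₀ _ h
  have factA : ∀ x : 𝓥 × 𝓤,
      q x * prob p (fun ω => (V ω, U ω) = x ∧ S ω = true)
        = prob p (fun ω => R (Y ω) (V ω) ≤ r ∧ (V ω, U ω) = x ∧ S ω = true) := by
    intro x
    by_cases hPS : prob p (fun ω => (V ω, U ω) = x ∧ S ω = true) = 0
    · rw [hPS, mul_zero]
      exact (prob_le_zero p hp (fun ω hω => hω.2) hPS).symm
    · have hPSpos : 0 < prob p (fun ω => (V ω, U ω) = x ∧ S ω = true) :=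
        lt_of_le_of_ne (prob_nn p hp _) (Ne.symm hPS)
      obtain ⟨hg0, -⟩ := hgpos x hPSpos
      have hPAS : prob p (fun ω => (V ω, U ω) = x ∧ A ω = true ∧ S ω = true)
          = g x * prob p (fun ω => (V ω, U ω) = x ∧ S ω = true) := by
        rw [hg x]
        unfold cprob
        rw [div_mul_cancel₀ _ hPS]
        exact probc p fun ω => by tauto
      have h3 : ∀ y : 𝓨, cprob p (fun ω => Y ω = y) (fun ω => (V ω, U ω) = x ∧ S ω = true)
          * prob p (fun ω => (V ω, U ω) = x ∧ S ω = true)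
          = prob p (fun ω => Y ω = y ∧ (V ω, U ω) = x ∧ S ω = true) := by
        intro y
        unfold cprob
        rw [div_mul_cancel₀ _ hPS]
      have hy : ∀ y : 𝓨, prob p (fun ω => Y ω = y ∧ (V ω, U ω) = x ∧ A ω = true ∧ S ω = true)
          = g x * prob p (fun ω => Y ω = y ∧ (V ω, U ω) = x ∧ S ω = true) := by
        intro y
        have h : cprob p (fun ω => Y ω = y ∧ A ω = true) (fun ω => (V ω, U ω) = x ∧ S ω = true)
            = cprob p (fun ω => Y ω = y) (fun ω => (V ω, U ω) = x ∧ S ω = true)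
              * cprob p (fun ω => A ω = true) (fun ω => (V ω, U ω) = x ∧ S ω = true) :=
          hunconf y true x hPSpos
        rw [← hg x] at h
        calc prob p (fun ω => Y ω = y ∧ (V ω, U ω) = x ∧ A ω = true ∧ S ω = true)
            = prob p (fun ω => (Y ω = y ∧ A ω = true) ∧ ((V ω, U ω) = x ∧ S ω = true)) :=
              probc p fun ω => by tauto
          _ = cprob p (fun ω => Y ω = y ∧ A ω = true) (fun ω => (V ω, U ω) = x ∧ S ω = true)
              * prob p (fun ω => (V ω, U ω) = x ∧ S ω = true) := (div_mul_cancel₀ _ hPS).symm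
          _ = cprob p (fun ω => Y ω = y) (fun ω => (V ω, U ω) = x ∧ S ω = true) * g x
              * prob p (fun ω => (V ω, U ω) = x ∧ S ω = true) := by rw [h]
          _ = g x * (cprob p (fun ω => Y ω = y) (fun ω => (V ω, U ω) = x ∧ S ω = true)
              * prob p (fun ω => (V ω, U ω) = x ∧ S ω = true)) := by ring
          _ = g x * prob p (fun ω => Y ω = y ∧ (V ω, U ω) = x ∧ S ω = true) := by rw [h3 y]
      have eA : prob p (fun ω => R (Y ω) (V ω) ≤ r ∧ (V ω, U ω) = x ∧ A ω = true ∧ S ω = true)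
          = prob p (fun ω => R (Y ω) x.1 ≤ r ∧ (V ω, U ω) = x ∧ A ω = true ∧ S ω = true) :=
        probc p fun ω => by
          have hv : ∀ _ : (V ω, U ω) = x, V ω = x.1 := fun h2 => by rw [← h2]
          constructor
          · rintro ⟨h1, h2, h3'⟩
            exact ⟨by rw [← hv h2]; exact h1, h2, h3'⟩
          · rintro ⟨h1, h2, h3'⟩
            exact ⟨by rw [hv h2]; exact h1, h2, h3'⟩
      have eS : prob p (fun ω => R (Y ω) (V ω) ≤ r ∧ (V ω, U ω) = x ∧ S ω = true)
          = prob p (fun ω => R (Y ω) x.1 ≤ r ∧ (V ω, U ω) = x ∧ S ω = true) :=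
        probc p fun ω => by
          have hv : ∀ _ : (V ω, U ω) = x, V ω = x.1 := fun h2 => by rw [← h2]
          constructor
          · rintro ⟨h1, h2, h3'⟩
            exact ⟨by rw [← hv h2]; exact h1, h2, h3'⟩
          · rintro ⟨h1, h2, h3'⟩
            exact ⟨by rw [hv h2]; exact h1, h2, h3'⟩
      have hnum : prob p (fun ω => R (Y ω) (V ω) ≤ r ∧ (V ω, U ω) = x ∧ A ω = true ∧ S ω = true)
          = g x * prob p (fun ω => R (Y ω) (V ω) ≤ r ∧ (V ω, U ω) = x ∧ S ω = true) := by
        rw [eA, eS,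
          prob_comp p Y (fun y => R y x.1 ≤ r)
            (fun ω => (V ω, U ω) = x ∧ A ω = true ∧ S ω = true),
          prob_comp p Y (fun y => R y x.1 ≤ r) (fun ω => (V ω, U ω) = x ∧ S ω = true),
          Finset.mul_sum]
        refine Finset.sum_congr rfl fun y _ => ?_
        by_cases hR2 : R y x.1 ≤ r
        · simp only [hR2, if_true]
          exact hy y
        · simp [hR2]
      have hq' := qkey x
      rw [hPAS, hnum] at hq'
      refine mul_left_cancel₀ hg0.ne' ?_
      calc g x * (q x * prob p (fun ω => (V ω, U ω) = x ∧ S ω = true))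
          = q x * (g x * prob p (fun ω => (V ω, U ω) = x ∧ S ω = true)) := by ring
        _ = g x * prob p (fun ω => R (Y ω) (V ω) ≤ r ∧ (V ω, U ω) = x ∧ S ω = true) := hq'
  have mkey : ∀ v : 𝓥,
      m v * prob p (fun ω => V ω = v ∧ S ω = true)
        = ∑ ω, ind (V ω = v ∧ S ω = true) * (p ω * q (V ω, U ω)) := by
    intro v
    by_cases h : prob p (fun ω => V ω = v ∧ S ω = true) = 0
    · rw [h, mul_zero]
      symm
      refine Finset.sum_eq_zero fun ω _ => ?_
      by_cases hω : V ω = v ∧ S ω = true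
      · rw [prob_zero p hp h hω]; simp [ind]
      · simp [ind, hω]
    · rw [hm v]
      unfold cexpect
      rw [div_mul_cancel₀ _ h]
      refine Finset.sum_congr rfl fun ω _ => ?_
      by_cases hω : V ω = v ∧ S ω = true <;> simp [ind, hω]
  have factB : ∀ v : 𝓥,
      m v * prob p (fun ω => V ω = v ∧ S ω = true)
        = prob p (fun ω => R (Y ω) (V ω) ≤ r ∧ V ω = v ∧ S ω = true) := by
    intro v
    rw [mkey v]
    rw [fiber_sum_ind (fun ω => (V ω, U ω))
      (fun ω => ind (V ω = v ∧ S ω = true) * (p ω * q (V ω, U ω)))]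
    rw [show prob p (fun ω => R (Y ω) (V ω) ≤ r ∧ V ω = v ∧ S ω = true)
        = ∑ ω, ind (R (Y ω) (V ω) ≤ r ∧ V ω = v ∧ S ω = true) * p ω from (ind_sum_prob p _).symm]
    rw [fiber_sum_ind (fun ω => (V ω, U ω))
      (fun ω => ind (R (Y ω) (V ω) ≤ r ∧ V ω = v ∧ S ω = true) * p ω)]
    refine Finset.sum_congr rfl fun x _ => ?_
    obtain ⟨xv, xu⟩ := x
    by_cases hxv : xv = v
    · have l1 : (∑ ω, ind ((V ω, U ω) = (xv, xu)) *
          (ind (V ω = v ∧ S ω = true) * (p ω * q (V ω, U ω))))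
          = q (xv, xu) * prob p (fun ω => (V ω, U ω) = (xv, xu) ∧ S ω = true) := by
        rw [show prob p (fun ω => (V ω, U ω) = (xv, xu) ∧ S ω = true)
            = ∑ ω, ind ((V ω, U ω) = (xv, xu) ∧ S ω = true) * p ω from (ind_sum_prob p _).symm,
          Finset.mul_sum]
        refine Finset.sum_congr rfl fun ω _ => ?_
        by_cases hxx : (V ω, U ω) = (xv, xu)
        · rw [Prod.mk.injEq] at hxx
          obtain ⟨h1, h2⟩ := hxx
          subst h1; subst h2
          by_cases hS : S ω = true <;> simp [ind, hxv, hS] <;> ring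
        · simp [ind, hxx]
      have l2 : (∑ ω, ind ((V ω, U ω) = (xv, xu)) *
          (ind (R (Y ω) (V ω) ≤ r ∧ V ω = v ∧ S ω = true) * p ω))
          = prob p (fun ω => R (Y ω) (V ω) ≤ r ∧ (V ω, U ω) = (xv, xu) ∧ S ω = true) := by
        rw [show prob p (fun ω => R (Y ω) (V ω) ≤ r ∧ (V ω, U ω) = (xv, xu) ∧ S ω = true)
            = ∑ ω, ind (R (Y ω) (V ω) ≤ r ∧ (V ω, U ω) = (xv, xu) ∧ S ω = true) * p ω
            from (ind_sum_prob p _).symm]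
        refine Finset.sum_congr rfl fun ω _ => ?_
        by_cases hxx : (V ω, U ω) = (xv, xu)
        · rw [Prod.mk.injEq] at hxx
          obtain ⟨h1, h2⟩ := hxx
          subst h1; subst h2
          by_cases hS : S ω = true <;> by_cases hR2 : R (Y ω) (V ω) ≤ r <;>
            simp [ind, hxv, hS, hR2]
        · simp [ind, hxx]
      rw [l1, l2, factA (xv, xu)]
    · have z1 : (∑ ω, ind ((V ω, U ω) = (xv, xu)) *
          (ind (V ω = v ∧ S ω = true) * (p ω * q (V ω, U ω)))) = 0 := by
        refine Finset.sum_eq_zero fun ω _ => ?_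
        by_cases hxx : (V ω, U ω) = (xv, xu)
        · rw [Prod.mk.injEq] at hxx
          obtain ⟨h1, h2⟩ := hxx
          subst h1; subst h2
          simp [ind, hxv]
        · simp [ind, hxx]
      have z2 : (∑ ω, ind ((V ω, U ω) = (xv, xu)) *
          (ind (R (Y ω) (V ω) ≤ r ∧ V ω = v ∧ S ω = true) * p ω)) = 0 := by
        refine Finset.sum_eq_zero fun ω _ => ?_
        by_cases hxx : (V ω, U ω) = (xv, xu)
        · rw [Prod.mk.injEq] at hxx
          obtain ⟨h1, h2⟩ := hxx
          subst h1; subst h2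
          simp [ind, hxv]
        · simp [ind, hxx]
      rw [z1, z2]
  have factC : ∀ v : 𝓥, 0 < prob p (fun ω => V ω = v) → ∀ s : Bool,
      prob p (fun ω => R (Y ω) (V ω) ≤ r ∧ V ω = v ∧ S ω = s)
        = (∑ y ∈ Finset.univ.image Y, ind (R y v ≤ r) *
            cprob p (fun ω => Y ω = y) (fun ω => V ω = v))
          * prob p (fun ω => V ω = v ∧ S ω = s) := by
    intro v hPv s
    have hPv' : 0 < prob p (fun ω => V ω = v ∧ True) := by
      rwa [probc p (show ∀ ω, (V ω = v ∧ True) ↔ (V ω = v) from fun ω => by tauto)]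
    have key : ∀ y, prob p (fun ω => Y ω = y ∧ V ω = v ∧ S ω = s)
        = cprob p (fun ω => Y ω = y) (fun ω => V ω = v)
          * prob p (fun ω => V ω = v ∧ S ω = s) := by
      intro y
      have h : cprob p (fun ω => Y ω = y ∧ S ω = s) (fun ω => V ω = v ∧ True)
          = cprob p (fun ω => Y ω = y) (fun ω => V ω = v ∧ True)
            * cprob p (fun ω => S ω = s) (fun ω => V ω = v ∧ True) := hexch y s v hPv'
      have e0 : ∀ (E : Ω → Prop), cprob p E (fun ω => V ω = v ∧ True)
          = cprob p E (fun ω => V ω = v) :=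
        fun E => cprob_congr p (fun ω => Iff.rfl) (fun ω => by tauto)
      rw [e0, e0, e0] at h
      have h2 := congrArg (· * prob p (fun ω => V ω = v)) h
      rw [show cprob p (fun ω => Y ω = y ∧ S ω = s) (fun ω => V ω = v)
            * prob p (fun ω => V ω = v)
          = prob p (fun ω => Y ω = y ∧ V ω = v ∧ S ω = s) from by
            unfold cprob
            rw [div_mul_cancel₀ _ hPv.ne']
            exact probc p fun ω => by tauto] at h2
      rw [mul_assoc, show cprob p (fun ω => S ω = s) (fun ω => V ω = v)
            * prob p (fun ω => V ω = v)
          = prob p (fun ω => V ω = v ∧ S ω = s) from by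
            unfold cprob
            rw [div_mul_cancel₀ _ hPv.ne']
            exact probc p fun ω => by tauto] at h2
      exact h2
    calc prob p (fun ω => R (Y ω) (V ω) ≤ r ∧ V ω = v ∧ S ω = s)
        = prob p (fun ω => R (Y ω) v ≤ r ∧ V ω = v ∧ S ω = s) := probc p fun ω => by
          constructor
          · rintro ⟨h1, h2, h3⟩
            exact ⟨by rwa [h2] at h1, h2, h3⟩
          · rintro ⟨h1, h2, h3⟩
            exact ⟨by rwa [h2], h2, h3⟩
      _ = ∑ y ∈ Finset.univ.image Y, if R y v ≤ r then
            prob p (fun ω => Y ω = y ∧ V ω = v ∧ S ω = s) else 0 :=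
          prob_comp p Y (fun y => R y v ≤ r) (fun ω => V ω = v ∧ S ω = s)
      _ = ∑ y ∈ Finset.univ.image Y, (ind (R y v ≤ r) *
            cprob p (fun ω => Y ω = y) (fun ω => V ω = v))
            * prob p (fun ω => V ω = v ∧ S ω = s) := by
          refine Finset.sum_congr rfl fun y _ => ?_
          by_cases hR2 : R y v ≤ r
          · simp [ind, hR2, key y]
          · simp [ind, hR2]
      _ = (∑ y ∈ Finset.univ.image Y, ind (R y v ≤ r) *
            cprob p (fun ω => Y ω = y) (fun ω => V ω = v))
          * prob p (fun ω => V ω = v ∧ S ω = s) := by rw [← Finset.sum_mul]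
  have fact1 : ∀ v : 𝓥,
      m v * prob p (fun ω => V ω = v ∧ S ω = false)
        = prob p (fun ω => R (Y ω) (V ω) ≤ r ∧ V ω = v ∧ S ω = false) := by
    intro v
    by_cases h0 : prob p (fun ω => V ω = v ∧ S ω = false) = 0
    · rw [h0, mul_zero]
      exact (prob_le_zero p hp (fun ω hω => hω.2) h0).symm
    · have h0pos : 0 < prob p (fun ω => V ω = v ∧ S ω = false) :=
        lt_of_le_of_ne (prob_nn p hp _) (Ne.symm h0)
      have hPv : 0 < prob p (fun ω => V ω = v) :=
        lt_of_lt_of_le h0pos (prob_mono p hp fun ω hω => hω.1)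
      obtain ⟨hκ0, -⟩ := hκpos v hPv
      have e2 : prob p (fun ω => V ω = v ∧ S ω = true)
          = cprob p (fun ω => S ω = true) (fun ω => V ω = v) * prob p (fun ω => V ω = v) := by
        rw [show cprob p (fun ω => S ω = true) (fun ω => V ω = v) * prob p (fun ω => V ω = v)
            = prob p (fun ω => S ω = true ∧ V ω = v) from div_mul_cancel₀ _ hPv.ne']
        exact probc p fun ω => by tauto
      have hP1 : 0 < prob p (fun ω => V ω = v ∧ S ω = true) := by
        rw [e2, ← hκ v]
        exact mul_pos hκ0 hPv
      have hmC : m v = ∑ y ∈ Finset.univ.image Y, ind (R y v ≤ r) *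
          cprob p (fun ω => Y ω = y) (fun ω => V ω = v) :=
        mul_right_cancel₀ hP1.ne' ((factB v).trans (factC v hPv true))
      rw [factC v hPv false, ← hmC]
  have hT3 : ∑ ω, p ω * (ind (A ω = true) * ind (S ω = true) * (1 - κ (V ω)) /
      (g (V ω, U ω) * κ (V ω)) * (ind (R (Y ω) (V ω) ≤ r) - q (V ω, U ω))) = 0 := by
    rw [fiber_sum_ind (fun ω => (V ω, U ω)) (fun ω => p ω * (ind (A ω = true) * ind (S ω = true) *
      (1 - κ (V ω)) / (g (V ω, U ω) * κ (V ω)) * (ind (R (Y ω) (V ω) ≤ r) - q (V ω, U ω))))]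
    refine Finset.sum_eq_zero fun x _ => ?_
    obtain ⟨xv, xu⟩ := x
    have key : ∀ ω, ind ((V ω, U ω) = (xv, xu)) * (p ω * (ind (A ω = true) * ind (S ω = true) *
        (1 - κ (V ω)) / (g (V ω, U ω) * κ (V ω)) * (ind (R (Y ω) (V ω) ≤ r) - q (V ω, U ω))))
        = (1 - κ xv) / (g (xv, xu) * κ xv) *
          (ind (R (Y ω) (V ω) ≤ r ∧ (V ω, U ω) = (xv, xu) ∧ A ω = true ∧ S ω = true) * p ω
            - q (xv, xu) * (ind ((V ω, U ω) = (xv, xu) ∧ A ω = true ∧ S ω = true) * p ω)) := by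
      intro ω
      by_cases hx : (V ω, U ω) = (xv, xu)
      · rw [Prod.mk.injEq] at hx
        obtain ⟨h1, h2⟩ := hx
        subst h1; subst h2
        by_cases hA : A ω = true <;> by_cases hS : S ω = true <;>
          by_cases hR : R (Y ω) (V ω) ≤ r <;> simp [ind, hA, hS, hR] <;> ring
      · simp [ind, hx]
    refine (Finset.sum_congr rfl fun ω _ => key ω).trans ?_
    rw [← Finset.mul_sum, Finset.sum_sub_distrib, ← Finset.mul_sum, ind_sum_prob p, ind_sum_prob p]
    rw [← qkey (xv, xu)]
    ring
  have hT2 : ∑ ω, p ω * (ind (S ω = true) * (1 - κ (V ω)) / κ (V ω) *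
      (q (V ω, U ω) - m (V ω))) = 0 := by
    rw [fiber_sum_ind V (fun ω => p ω * (ind (S ω = true) * (1 - κ (V ω)) / κ (V ω) *
      (q (V ω, U ω) - m (V ω))))]
    refine Finset.sum_eq_zero fun v _ => ?_
    have key : ∀ ω, ind (V ω = v) * (p ω * (ind (S ω = true) * (1 - κ (V ω)) / κ (V ω) *
        (q (V ω, U ω) - m (V ω))))
        = (1 - κ v) / κ v * (ind (V ω = v ∧ S ω = true) * (p ω * q (V ω, U ω))
            - m v * (ind (V ω = v ∧ S ω = true) * p ω)) := by
      intro ω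
      by_cases hv : V ω = v
      · subst hv
        by_cases hS : S ω = true <;> simp [ind, hS] <;> ring
      · simp [ind, hv]
    refine (Finset.sum_congr rfl fun ω _ => key ω).trans ?_
    rw [← Finset.mul_sum, Finset.sum_sub_distrib, ← Finset.mul_sum, ind_sum_prob p]
    rw [← mkey v]
    ring
  have hT1 : ∑ ω, p ω * (ind (S ω = false) * (m (V ω) - (1 - α))) = 0 := by
    have step : ∀ ω, p ω * (ind (S ω = false) * (m (V ω) - (1 - α)))
        = ind (S ω = false) * (p ω * m (V ω)) - (1 - α) * (ind (S ω = false) * p ω) := by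
      intro ω; by_cases hS : S ω = false <;> simp [ind, hS] <;> ring
    refine (Finset.sum_congr rfl fun ω _ => step ω).trans ?_
    rw [Finset.sum_sub_distrib, ← Finset.mul_sum, ind_sum_prob p]
    have hM : (∑ ω, ind (S ω = false) * (p ω * m (V ω)))
        = prob p (fun ω => R (Y ω) (V ω) ≤ r ∧ S ω = false) := by
      rw [fiber_sum_ind V (fun ω => ind (S ω = false) * (p ω * m (V ω)))]
      have hRd : prob p (fun ω => R (Y ω) (V ω) ≤ r ∧ S ω = false)
          = ∑ v ∈ Finset.univ.image V,
              prob p (fun ω => R (Y ω) (V ω) ≤ r ∧ V ω = v ∧ S ω = false) := by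
        rw [show prob p (fun ω => R (Y ω) (V ω) ≤ r ∧ S ω = false)
            = ∑ ω, ind (R (Y ω) (V ω) ≤ r ∧ S ω = false) * p ω from (ind_sum_prob p _).symm]
        rw [fiber_sum_ind V (fun ω => ind (R (Y ω) (V ω) ≤ r ∧ S ω = false) * p ω)]
        refine Finset.sum_congr rfl fun v _ => ?_
        rw [show prob p (fun ω => R (Y ω) (V ω) ≤ r ∧ V ω = v ∧ S ω = false)
            = ∑ ω, ind (R (Y ω) (V ω) ≤ r ∧ V ω = v ∧ S ω = false) * p ω from (ind_sum_prob p _).symm]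
        refine Finset.sum_congr rfl fun ω _ => ?_
        by_cases hv : V ω = v <;> by_cases hc : R (Y ω) (V ω) ≤ r <;>
          by_cases hS : S ω = false <;> simp [ind, hv, hc, hS]
      rw [hRd]
      refine Finset.sum_congr rfl fun v _ => ?_
      have lhs1 : (∑ ω, ind (V ω = v) * (ind (S ω = false) * (p ω * m (V ω))))
          = m v * prob p (fun ω => V ω = v ∧ S ω = false) := by
        rw [show prob p (fun ω => V ω = v ∧ S ω = false)
            = ∑ ω, ind (V ω = v ∧ S ω = false) * p ω from (ind_sum_prob p _).symm, Finset.mul_sum]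
        refine Finset.sum_congr rfl fun ω _ => ?_
        by_cases hv : V ω = v
        · subst hv
          by_cases hS : S ω = false <;> simp [ind, hS] <;> ring
        · simp [ind, hv]
      rw [lhs1, fact1 v]
    rw [hM]
    have hRS : prob p (fun ω => R (Y ω) (V ω) ≤ r ∧ S ω = false)
        = (1 - α) * prob p (fun ω => S ω = false) := by
      rw [← hr]
      exact (div_mul_cancel₀ _ hS0.ne').symm
    rw [hRS]
    ring
  unfold _root_.expect
  calc ∑ ω, p ω * (ind (S ω = false) * (m (V ω) - (1 - α))
      + ind (S ω = true) * (1 - κ (V ω)) / κ (V ω) * (q (V ω, U ω) - m (V ω))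
      + ind (A ω = true) * ind (S ω = true) * (1 - κ (V ω)) / (g (V ω, U ω) * κ (V ω)) *
          (ind (R (Y ω) (V ω) ≤ r) - q (V ω, U ω)))
      = ∑ ω, (p ω * (ind (S ω = false) * (m (V ω) - (1 - α)))
        + p ω * (ind (S ω = true) * (1 - κ (V ω)) / κ (V ω) * (q (V ω, U ω) - m (V ω)))
        + p ω * (ind (A ω = true) * ind (S ω = true) * (1 - κ (V ω)) /
            (g (V ω, U ω) * κ (V ω)) * (ind (R (Y ω) (V ω) ≤ r) - q (V ω, U ω)))) :=
      Finset.sum_congr rfl fun ω _ => by ring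
    _ = 0 := by
      rw [Finset.sum_add_distrib, Finset.sum_add_distrib, hT1, hT2, hT3]; ring
end

section
/- Let $(Y,S,V)$ be discrete random variables with $S \in \{0,1\}$, $Y \perp S \mid V$, and $0 < \kappa(v) := P(S=1\mid V=v) < 1$ whenever $P(V=v)>0$; assume $P(S=0)>0$. Then for any bounded $h(y,v)$: $E\left[\frac{S\,(1-\kappa(V))}{\kappa(V)}\, h(Y,V)\right] = P(S=0)\, E[h(Y,V) \mid S=0]$. -/
open scoped Classical
open Finset

lemma prob_congr {Ω : Type*} [Fintype Ω] (p : Ω → ℝ) {A B : Ω → Prop}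
    (hAB : ∀ ω, A ω ↔ B ω) : prob p A = prob p B := by
  unfold prob
  exact Finset.sum_congr rfl (fun ω _ => by simp [hAB ω])

lemma prob_nonneg {Ω : Type*} [Fintype Ω] {p : Ω → ℝ} (hp : ∀ ω, 0 ≤ p ω)
    (A : Ω → Prop) : 0 ≤ prob p A := by
  unfold prob
  exact Finset.sum_nonneg fun ω _ => by by_cases hA : A ω <;> simp [hA, hp ω]

/-- inverse-odds weighting transports source expectations to the target. -/
theorem stmt9 {Ω 𝓨 𝓥 : Type*} [Fintype Ω]
    (p : Ω → ℝ) (hp : ∀ ω, 0 ≤ p ω) (hsum : ∑ ω, p ω = 1)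
    (Y : Ω → 𝓨) (S : Ω → Bool) (V : Ω → 𝓥)
    (hexch : CondIndep p Y S V)
    (κ : 𝓥 → ℝ)
    (hκ : ∀ v, κ v = cprob p (fun ω => S ω = true) (fun ω => V ω = v))
    (hκpos : ∀ v, 0 < prob p (fun ω => V ω = v) → 0 < κ v ∧ κ v < 1)
    (hS0 : 0 < prob p (fun ω => S ω = false))
    (h : 𝓨 → 𝓥 → ℝ) (hbd : ∃ M, ∀ y v, |h y v| ≤ M) :
    expect p (fun ω => ind (S ω = true) * (1 - κ (V ω)) / κ (V ω) * h (Y ω) (V ω))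
      = prob p (fun ω => S ω = false) *
          cexpect p (fun ω => h (Y ω) (V ω)) (fun ω => S ω = false) := by
  classical
  -- key fiberwise identity
  have key : ∀ (y : 𝓨) (v : 𝓥),
      prob p (fun ω => Y ω = y ∧ V ω = v ∧ S ω = true) * ((1 - κ v) / κ v)
        = prob p (fun ω => Y ω = y ∧ V ω = v ∧ S ω = false) := by
    intro y v
    set Pv := prob p (fun ω => V ω = v) with hPv
    rcases lt_or_eq_of_le (prob_nonneg hp (fun ω => V ω = v)) with hpos | hzero
    · -- Pv > 0
      obtain ⟨hκ0, hκ1⟩ := hκpos v hpos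
      have hexv := hexch y true v (by
        rw [prob_congr p (A := fun ω => V ω = v ∧ True) (B := fun ω => V ω = v)
          (fun ω => by tauto)]; exact hpos)
      have hexv' := hexch y false v (by
        rw [prob_congr p (A := fun ω => V ω = v ∧ True) (B := fun ω => V ω = v)
          (fun ω => by tauto)]; exact hpos)
      set A := prob p (fun ω => Y ω = y ∧ V ω = v) with hA
      set qt := prob p (fun ω => Y ω = y ∧ V ω = v ∧ S ω = true) with hqt
      set qf := prob p (fun ω => Y ω = y ∧ V ω = v ∧ S ω = false) with hqf
      set st := prob p (fun ω => S ω = true ∧ V ω = v) with hst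
      set sf := prob p (fun ω => S ω = false ∧ V ω = v) with hsf
      have hPvne : Pv ≠ 0 := ne_of_gt hpos
      have hκv : κ v = st / Pv := by
        rw [hκ v]; unfold cprob; rfl
      have hsplit : sf + st = Pv := by
        rw [hsf, hst, hPv]; unfold prob
        rw [← Finset.sum_add_distrib]
        refine Finset.sum_congr rfl fun ω _ => ?_
        cases hSb : S ω <;> by_cases hV : V ω = v <;> simp [hSb, hV]
      -- rewrite hexv into qt = A * κ v
      unfold cprob at hexv hexv'
      rw [prob_congr p (A := fun ω => (fun ω => Y ω = y ∧ S ω = true) ω ∧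
            V ω = v ∧ True) (B := fun ω => Y ω = y ∧ V ω = v ∧ S ω = true)
            (fun ω => by tauto),
          prob_congr p (A := fun ω => (fun ω => Y ω = y) ω ∧ V ω = v ∧ True)
            (B := fun ω => Y ω = y ∧ V ω = v) (fun ω => by tauto),
          prob_congr p (A := fun ω => (fun ω => S ω = true) ω ∧ V ω = v ∧ True)
            (B := fun ω => S ω = true ∧ V ω = v) (fun ω => by tauto),
          prob_congr p (A := fun ω => V ω = v ∧ True) (B := fun ω => V ω = v)
            (fun ω => by tauto)] at hexv
      rw [prob_congr p (A := fun ω => (fun ω => Y ω = y ∧ S ω = false) ω ∧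
            V ω = v ∧ True) (B := fun ω => Y ω = y ∧ V ω = v ∧ S ω = false)
            (fun ω => by tauto),
          prob_congr p (A := fun ω => (fun ω => Y ω = y) ω ∧ V ω = v ∧ True)
            (B := fun ω => Y ω = y ∧ V ω = v) (fun ω => by tauto),
          prob_congr p (A := fun ω => (fun ω => S ω = false) ω ∧ V ω = v ∧ True)
            (B := fun ω => S ω = false ∧ V ω = v) (fun ω => by tauto),
          prob_congr p (A := fun ω => V ω = v ∧ True) (B := fun ω => V ω = v)
            (fun ω => by tauto)] at hexv'
      rw [← hA, ← hqt, ← hst, ← hPv] at hexv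
      rw [← hA, ← hqf, ← hsf, ← hPv] at hexv'
      have hst' : st = κ v * Pv := by
        rw [hκv, div_mul_cancel₀ _ hPvne]
      have hsf' : sf = (1 - κ v) * Pv := by
        have : sf = Pv - st := by linarith
        rw [this, hst']; ring
      have hqt' : qt = A * κ v := by
        have := hexv
        rw [hst'] at this
        field_simp at this
        linarith
      have hqf' : qf = A * (1 - κ v) := by
        have := hexv'
        rw [hsf'] at this
        field_simp at this
        linarith
      rw [hqt', hqf']
      field_simp
    · -- Pv = 0 : all mass on {V = v} is zero
      have hz : ∀ ω, V ω = v → p ω = 0 := by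
        intro ω hV
        have h0 : ∑ ω, (if V ω = v then p ω else 0) = 0 := by
          have := hzero.symm
          unfold prob at this
          exact this
        have := (Finset.sum_eq_zero_iff_of_nonneg
          (fun ω _ => by by_cases hV' : V ω = v <;> simp [hV', hp ω])).mp h0 ω
          (Finset.mem_univ ω)
        simpa [hV] using this
      have e1 : prob p (fun ω => Y ω = y ∧ V ω = v ∧ S ω = true) = 0 := by
        unfold prob
        exact Finset.sum_eq_zero fun ω _ => by
          by_cases hc : Y ω = y ∧ V ω = v ∧ S ω = true
          · simp [hc, hz ω hc.2.1]
          · simp [hc]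
      have e2 : prob p (fun ω => Y ω = y ∧ V ω = v ∧ S ω = false) = 0 := by
        unfold prob
        exact Finset.sum_eq_zero fun ω _ => by
          by_cases hc : Y ω = y ∧ V ω = v ∧ S ω = false
          · simp [hc, hz ω hc.2.1]
          · simp [hc]
      rw [e1, e2]; ring
  -- rewrite both sides as sums and group by fibers of ω ↦ (Y ω, V ω)
  set F : Ω → 𝓨 × 𝓥 := fun ω => (Y ω, V ω) with hF
  set T : Finset (𝓨 × 𝓥) := Finset.univ.image F with hT
  have hmaps : ∀ ω ∈ (Finset.univ : Finset Ω), F ω ∈ T :=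
    fun ω _ => Finset.mem_image_of_mem F (Finset.mem_univ ω)
  -- LHS
  have hLHS : _root_.expect p (fun ω => ind (S ω = true) * (1 - κ (V ω)) / κ (V ω) * h (Y ω) (V ω))
      = ∑ yv ∈ T, (1 - κ yv.2) / κ yv.2 * h yv.1 yv.2 *
          prob p (fun ω => Y ω = yv.1 ∧ V ω = yv.2 ∧ S ω = true) := by
    unfold _root_.expect
    simp only []
    rw [← Finset.sum_fiberwise_of_maps_to hmaps
      (fun ω => p ω * (ind (S ω = true) * (1 - κ (V ω)) / κ (V ω) * h (Y ω) (V ω)))]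
    refine Finset.sum_congr rfl fun yv _ => ?_
    rw [show prob p (fun ω => Y ω = yv.1 ∧ V ω = yv.2 ∧ S ω = true)
        = ∑ ω ∈ Finset.univ.filter (fun ω => F ω = yv),
            (if S ω = true then p ω else 0) by
      rw [Finset.sum_filter]
      unfold prob
      refine Finset.sum_congr rfl fun ω _ => ?_
      by_cases h1 : Y ω = yv.1 <;> by_cases h2 : V ω = yv.2 <;>
        by_cases h3 : S ω = true <;>
        simp [hF, Prod.ext_iff, h1, h2, h3]]
    rw [Finset.mul_sum]
    refine Finset.sum_congr rfl fun ω hω => ?_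
    have hω' : Y ω = yv.1 ∧ V ω = yv.2 := by
      have := (Finset.mem_filter.mp hω).2
      simpa [hF, Prod.ext_iff] using this
    rw [hω'.1, hω'.2]
    by_cases h3 : S ω = true <;> simp [ind, h3] <;> ring
  -- RHS
  have hRHS : prob p (fun ω => S ω = false) *
        cexpect p (fun ω => h (Y ω) (V ω)) (fun ω => S ω = false)
      = ∑ yv ∈ T, h yv.1 yv.2 *
          prob p (fun ω => Y ω = yv.1 ∧ V ω = yv.2 ∧ S ω = false) := by
    unfold cexpect
    simp only []
    rw [mul_comm, div_mul_cancel₀ _ (ne_of_gt hS0)]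
    rw [← Finset.sum_fiberwise_of_maps_to hmaps
      (fun ω => if S ω = false then p ω * h (Y ω) (V ω) else 0)]
    refine Finset.sum_congr rfl fun yv _ => ?_
    rw [show prob p (fun ω => Y ω = yv.1 ∧ V ω = yv.2 ∧ S ω = false)
        = ∑ ω ∈ Finset.univ.filter (fun ω => F ω = yv),
            (if S ω = false then p ω else 0) by
      rw [Finset.sum_filter]
      unfold prob
      refine Finset.sum_congr rfl fun ω _ => ?_
      by_cases h1 : Y ω = yv.1 <;> by_cases h2 : V ω = yv.2 <;>
        by_cases h3 : S ω = false <;>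
        simp [hF, Prod.ext_iff, h1, h2, h3]]
    rw [Finset.mul_sum]
    refine Finset.sum_congr rfl fun ω hω => ?_
    have hω' : Y ω = yv.1 ∧ V ω = yv.2 := by
      have := (Finset.mem_filter.mp hω).2
      simpa [hF, Prod.ext_iff] using this
    rw [hω'.1, hω'.2]
    by_cases h3 : S ω = false <;> simp [h3] <;> ring
  rw [hLHS, hRHS]
  refine Finset.sum_congr rfl fun yv _ => ?_
  rw [← key yv.1 yv.2]
  ring
end
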